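/- Let (X, μ) be a σ-finite measure space and w : X → [0,∞) a measurable function. For δ ∈ (0,1] define F_δ = {u ∈ L²(μ) : ∫_X w^δ |u|² dμ < ∞}. Then F₁ ⊆ ⋂_{δ∈(0,1)} F_δ, and equality F₁ = ⋂_{δ∈(0,1)} F_δ holds if and only if w is μ-essentially bounded. -/

import Mathlib

/-!
Split `{w ≥ 1}` into the dyadic shells `Eₖ = {2ᵏ ≤ w < 2ᵏ⁺¹}`. If `w` is not essentially
bounded, infinitely many shells are non-null. Using a positive integrable `h` (σ-finiteness), put
`|u|² = 2⁻ᵏ h / ∫_{Eₖ} h` on `Eₖ`. Then shell `k` contributes at most `2⁻ᵏ 2^{(k+1)δ}` to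
`∫ w^δ |u|²`, a geometric series for `δ < 1`, but at least `1` to `∫ w |u|²` whenever it is
non-null. Conversely `w^δ ≤ 1 + w` gives `F₁ ⊆ F_δ`, and `w ≤ C` gives `L² ⊆ F₁`.
-/

open MeasureTheory Set

/-- The weighted form domain `F_δ = {u ∈ L²(μ) : ∫ w^δ |u|² dμ < ∞}`. -/
def formDomain {X : Type*} [MeasurableSpace X] (μ : Measure X) (w : X → ℝ)
    (δ : ℝ) : Set (X → ℝ) :=
  {u | MemLp u 2 μ ∧ Integrable (fun x => w x ^ δ * |u x| ^ 2) μ}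

open scoped ENNReal

section

variable {X : Type*} [MeasurableSpace X] {μ : Measure X} {w : X → ℝ}

lemma Real.rpow_le_one_add_rpow {x δ δ' : ℝ} (hx : 0 ≤ x) (hδ : 0 ≤ δ) (hδδ' : δ ≤ δ') :
    x ^ δ ≤ 1 + x ^ δ' := by
  rcases le_or_gt x 1 with h | h
  · linarith [Real.rpow_le_one hx h hδ, Real.rpow_nonneg hx δ']
  · linarith [Real.rpow_le_rpow_of_exponent_le h.le hδδ']

lemma lintegral_mul_tsum_indicator {f h : X → ℝ≥0∞} (hf : Measurable f) (hh : Measurable h)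
    {E : ℕ → Set X} (hE : ∀ k, MeasurableSet (E k)) (c : ℕ → ℝ≥0∞) :
    ∫⁻ x, f x * ∑' k, (E k).indicator (fun y => c k * h y) x ∂μ =
      ∑' k, c k * ∫⁻ x in E k, f x * h x ∂μ := by
  simp_rw [← ENNReal.tsum_mul_left, ← indicator_mul_right]
  rw [lintegral_tsum fun k => (Measurable.indicator (by fun_prop) (hE k)).aemeasurable]
  congr 1 with k
  rw [lintegral_indicator (hE k), ← lintegral_const_mul _ (by fun_prop)]
  simp only [mul_left_comm]

lemma tsum_inv_two_pow_mul_rpow_ne_top {δ : ℝ} (hδ : δ < 1) :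
    ∑' k : ℕ, (2 ^ k)⁻¹ * ENNReal.ofReal ((2 ^ (k + 1)) ^ δ) ≠ ∞ := by
  set r := ENNReal.ofReal (2 ^ δ)
  have hr : r / 2 < 1 := by
    refine ENNReal.div_lt_of_lt_mul ?_
    rw [one_mul, ← ENNReal.ofReal_ofNat 2]
    refine (ENNReal.ofReal_lt_ofReal_iff two_pos).2 ?_
    simpa using Real.rpow_lt_rpow_of_exponent_lt one_lt_two hδ
  have hterm : ∀ k : ℕ, (2 ^ k)⁻¹ * ENNReal.ofReal ((2 ^ (k + 1)) ^ δ) = r * (r / 2) ^ k := by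
    intro k
    rw [← Real.rpow_pow_comm zero_le_two, ENNReal.ofReal_pow (by positivity), div_eq_mul_inv,
      mul_pow, ENNReal.inv_pow, pow_succ]
    ring
  simp_rw [hterm, ENNReal.tsum_mul_left]
  exact ENNReal.mul_ne_top ENNReal.ofReal_ne_top (tsum_geometric_lt_top.2 hr).ne

lemma aestronglyMeasurable_rpow_mul_sq_abs (hw : Measurable w) {u : X → ℝ}
    (hu : AEStronglyMeasurable u μ) (δ : ℝ) :
    AEStronglyMeasurable (fun x => w x ^ δ * |u x| ^ 2) μ :=
  (hw.pow_const δ).aestronglyMeasurable.mul (hu.norm.pow 2)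

lemma formDomain_subset_formDomain (hw : Measurable w) (hw0 : ∀ x, 0 ≤ w x) {δ δ' : ℝ}
    (hδ : 0 ≤ δ) (hδδ' : δ ≤ δ') : formDomain μ w δ' ⊆ formDomain μ w δ := by
  rintro u ⟨hu, hint⟩
  refine ⟨hu, (hu.integrable_sq.add hint).mono'
    (aestronglyMeasurable_rpow_mul_sq_abs hw hu.1 δ) (ae_of_all _ fun x => ?_)⟩
  rw [Real.norm_of_nonneg (mul_nonneg (Real.rpow_nonneg (hw0 x) δ) (sq_nonneg _))]
  calc w x ^ δ * |u x| ^ 2 ≤ (1 + w x ^ δ') * |u x| ^ 2 := by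
        gcongr
        exact Real.rpow_le_one_add_rpow (hw0 x) hδ hδδ'
    _ = u x ^ 2 + w x ^ δ' * |u x| ^ 2 := by rw [sq_abs]; ring

lemma mem_formDomain_of_memLp_of_ae_le (hw : Measurable w) (hw0 : ∀ x, 0 ≤ w x) {δ C : ℝ}
    (hδ : 0 ≤ δ) (hC : ∀ᵐ x ∂μ, w x ≤ C) {u : X → ℝ} (hu : MemLp u 2 μ) :
    u ∈ formDomain μ w δ := by
  refine ⟨hu, (hu.integrable_sq.const_mul (C ^ δ)).mono'
    (aestronglyMeasurable_rpow_mul_sq_abs hw hu.1 δ) ?_⟩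
  filter_upwards [hC] with x hx
  rw [Real.norm_of_nonneg (mul_nonneg (Real.rpow_nonneg (hw0 x) δ) (sq_nonneg _)), sq_abs]
  exact mul_le_mul_of_nonneg_right (Real.rpow_le_rpow (hw0 x) hx hδ) (sq_nonneg _)

lemma sqrt_toReal_mem_formDomain_iff (hw : Measurable w) (hw0 : ∀ x, 0 ≤ w x)
    {G : X → ℝ≥0∞} (hG : Measurable G) (hG_top : ∀ᵐ x ∂μ, G x ≠ ∞) (δ : ℝ) :
    (fun x => √(G x).toReal) ∈ formDomain μ w δ ↔
      ∫⁻ x, G x ∂μ ≠ ∞ ∧ ∫⁻ x, ENNReal.ofReal (w x ^ δ) * G x ∂μ ≠ ∞ := by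
  have hsq : (fun x => √(G x).toReal ^ 2) = fun x => (G x).toReal :=
    funext fun x => Real.sq_sqrt ENNReal.toReal_nonneg
  have hweighted : (fun x => w x ^ δ * |√(G x).toReal| ^ 2) =
      fun x => (ENNReal.ofReal (w x ^ δ) * G x).toReal := funext fun x => by
    rw [sq_abs, Real.sq_sqrt ENNReal.toReal_nonneg, ENNReal.toReal_mul,
      ENNReal.toReal_ofReal (Real.rpow_nonneg (hw0 x) δ)]
  rw [formDomain, mem_ofPred_eq, memLp_two_iff_integrable_sq
    (hG.ennreal_toReal.sqrt.aestronglyMeasurable), hsq, hweighted,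
    integrable_toReal_iff hG.aemeasurable hG_top, integrable_toReal_iff (by fun_prop)
      (hG_top.mono fun x hx => ENNReal.mul_ne_top ENNReal.ofReal_ne_top hx)]

def dyadicShell (w : X → ℝ) (k : ℕ) : Set X := w ⁻¹' Ico (2 ^ k) (2 ^ (k + 1))

lemma measurableSet_dyadicShell (hw : Measurable w) (k : ℕ) : MeasurableSet (dyadicShell w k) :=
  hw measurableSet_Ico

lemma infinite_setOf_measure_dyadicShell_ne_zero (hunb : ¬ ∃ C, ∀ᵐ x ∂μ, w x ≤ C) :
    {k | μ (dyadicShell w k) ≠ 0}.Infinite := by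
  refine infinite_of_forall_exists_gt fun N => ?_
  by_contra! hnull
  refine hunb ⟨2 ^ (N + 1), ?_⟩
  have hcover : {x | ¬ w x ≤ 2 ^ (N + 1)} ⊆ ⋃ k ∈ Ioi N, dyadicShell w k := by
    intro x hx
    obtain ⟨k, hk, hk'⟩ := exists_nat_pow_near
      (one_le_pow₀ one_le_two |>.trans (not_le.1 hx).le) one_lt_two
    have hNk : N < k := Nat.succ_lt_succ_iff.1 <|
      (pow_lt_pow_iff_right₀ one_lt_two).1 ((not_le.1 hx).trans hk')
    exact mem_biUnion hNk ⟨hk, hk'⟩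
  rw [ae_iff]
  exact measure_mono_null hcover <| (measure_biUnion_null_iff (to_countable _)).2 fun k hk =>
    not_not.1 fun h => (hnull k h).not_gt hk

-- On the `k`-th dyadic shell, `h` rescaled to total mass `2⁻ᵏ`.
noncomputable def shellDensity (μ : Measure X) (w : X → ℝ) (h : X → ℝ≥0∞) (x : X) : ℝ≥0∞ :=
  ∑' k, (dyadicShell w k).indicator
    (fun y => (2 ^ k)⁻¹ * (∫⁻ z in dyadicShell w k, h z ∂μ)⁻¹ * h y) x

lemma measurable_shellDensity (hw : Measurable w) {h : X → ℝ≥0∞} (hh : Measurable h) :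
    Measurable (shellDensity μ w h) :=
  Measurable.tsum fun k => (hh.const_mul _).indicator (measurableSet_dyadicShell hw k)

lemma lintegral_rpow_mul_shellDensity_ne_top (hw : Measurable w) (hw0 : ∀ x, 0 ≤ w x)
    {h : X → ℝ≥0∞} (hh : Measurable h) {δ : ℝ} (hδ : δ ∈ Ico (0 : ℝ) 1) :
    ∫⁻ x, ENNReal.ofReal (w x ^ δ) * shellDensity μ w h x ∂μ ≠ ∞ := by
  unfold shellDensity
  rw [lintegral_mul_tsum_indicator (hw.pow_const δ).ennreal_ofReal hh
    (measurableSet_dyadicShell hw)]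
  refine ne_top_of_le_ne_top (tsum_inv_two_pow_mul_rpow_ne_top hδ.2)
    (ENNReal.tsum_le_tsum fun k => ?_)
  set m := ∫⁻ z in dyadicShell w k, h z ∂μ
  have hbound : ∫⁻ x in dyadicShell w k, ENNReal.ofReal (w x ^ δ) * h x ∂μ ≤
      ENNReal.ofReal ((2 ^ (k + 1)) ^ δ) * m := by
    rw [← lintegral_const_mul _ hh]
    refine setLIntegral_mono (hh.const_mul _) fun x hx => mul_le_mul_left ?_ _
    exact ENNReal.ofReal_le_ofReal (Real.rpow_le_rpow (hw0 x) hx.2.le hδ.1)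
  calc (2 ^ k)⁻¹ * m⁻¹ * ∫⁻ x in dyadicShell w k, ENNReal.ofReal (w x ^ δ) * h x ∂μ
      ≤ (2 ^ k)⁻¹ * m⁻¹ * (ENNReal.ofReal ((2 ^ (k + 1)) ^ δ) * m) := by gcongr
    _ = (2 ^ k)⁻¹ * ENNReal.ofReal ((2 ^ (k + 1)) ^ δ) * (m⁻¹ * m) := by ring
    _ ≤ (2 ^ k)⁻¹ * ENNReal.ofReal ((2 ^ (k + 1)) ^ δ) :=
        mul_le_of_le_one_right' (ENNReal.inv_mul_le_one _)

lemma lintegral_mul_shellDensity_eq_top (hw : Measurable w) {h : X → ℝ≥0∞} (hh : Measurable h)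
    (h_pos : ∀ x, h x ≠ 0) (h_int : ∫⁻ x, h x ∂μ ≠ ∞) (hunb : ¬ ∃ C, ∀ᵐ x ∂μ, w x ≤ C) :
    ∫⁻ x, ENNReal.ofReal (w x) * shellDensity μ w h x ∂μ = ∞ := by
  have hE := measurableSet_dyadicShell hw
  unfold shellDensity
  rw [lintegral_mul_tsum_indicator hw.ennreal_ofReal hh hE]
  set S := {k | μ (dyadicShell w k) ≠ 0}
  have hS : ∑' k, S.indicator (fun _ => 1) k = ∞ := by
    rw [← tsum_subtype, ENNReal.tsum_set_const,
      (infinite_setOf_measure_dyadicShell_ne_zero hunb).encard_eq]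
    simp
  refine eq_top_mono (ENNReal.tsum_le_tsum fun k => ?_) hS
  by_cases hk : k ∈ S
  · set m := ∫⁻ z in dyadicShell w k, h z ∂μ
    have hm_zero : m ≠ 0 := by
      simpa [m, setLIntegral_eq_zero_iff (hE k) hh, h_pos, ← measure_eq_zero_iff_ae_notMem, S]
        using hk
    have hm_top : m ≠ ∞ := ne_top_of_le_ne_top h_int (setLIntegral_le_lintegral _ _)
    have hbound : 2 ^ k * m ≤ ∫⁻ x in dyadicShell w k, ENNReal.ofReal (w x) * h x ∂μ := by
      rw [← lintegral_const_mul _ hh]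
      refine setLIntegral_mono (by fun_prop) fun x hx => mul_le_mul_left ?_ _
      simpa using ENNReal.ofReal_le_ofReal hx.1
    calc S.indicator (fun _ => 1) k = (2 ^ k)⁻¹ * 2 ^ k * (m⁻¹ * m) := by
          rw [indicator_of_mem hk, ENNReal.inv_mul_cancel (by simp) (by simp),
            ENNReal.inv_mul_cancel hm_zero hm_top, one_mul]
      _ = (2 ^ k)⁻¹ * m⁻¹ * (2 ^ k * m) := by ring
      _ ≤ _ := by gcongr
  · simp [indicator_of_notMem hk]

lemma exists_mem_iInter_formDomain_notMem_formDomain_one [SigmaFinite μ] (hw : Measurable w)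
    (hw0 : ∀ x, 0 ≤ w x) (hunb : ¬ ∃ C, ∀ᵐ x ∂μ, w x ≤ C) :
    ∃ u ∈ ⋂ δ ∈ Ioo (0 : ℝ) 1, formDomain μ w δ, u ∉ formDomain μ w 1 := by
  obtain ⟨h, h_pos, h_meas, h_int⟩ := exists_pos_lintegral_lt_of_sigmaFinite μ one_ne_zero
  have hh : Measurable fun x => (h x : ℝ≥0∞) := h_meas.coe_nnreal_ennreal
  set G := shellDensity μ w fun x => (h x : ℝ≥0∞)
  have hG : Measurable G := measurable_shellDensity hw hh
  have hfin : ∀ δ ∈ Ico (0 : ℝ) 1, ∫⁻ x, ENNReal.ofReal (w x ^ δ) * G x ∂μ ≠ ∞ :=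
    fun δ hδ => lintegral_rpow_mul_shellDensity_ne_top hw hw0 hh hδ
  have hinf : ∫⁻ x, ENNReal.ofReal (w x) * G x ∂μ = ∞ :=
    lintegral_mul_shellDensity_eq_top hw hh (fun x => by simpa using (h_pos x).ne')
      (h_int.trans ENNReal.one_lt_top).ne hunb
  have hG_int : ∫⁻ x, G x ∂μ ≠ ∞ := by simpa using hfin 0 ⟨le_rfl, one_pos⟩
  have hG_top : ∀ᵐ x ∂μ, G x ≠ ∞ := (ae_lt_top hG hG_int).mono fun _ => ne_of_lt
  refine ⟨fun x => √(G x).toReal, mem_iInter₂.2 fun δ hδ => ?_, ?_⟩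
  · exact (sqrt_toReal_mem_formDomain_iff hw hw0 hG hG_top δ).2
      ⟨hG_int, hfin δ ⟨hδ.1.le, hδ.2⟩⟩
  · rw [sqrt_toReal_mem_formDomain_iff hw hw0 hG hG_top]
    simp only [Real.rpow_one]
    exact fun hmem => hmem.2 hinf

end

/-- Spectral-multiplier form of Theorem 1.4: `F₁ ⊆ ⋂_{δ∈(0,1)} F_δ`, with
equality if and only if `w` is `μ`-essentially bounded. -/
theorem stmt_10 {X : Type*} [MeasurableSpace X] (μ : Measure X) [SigmaFinite μ]
    (w : X → ℝ) (hw_meas : Measurable w) (hw_nonneg : ∀ x, 0 ≤ w x) :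
    formDomain μ w 1 ⊆ (⋂ δ ∈ Set.Ioo (0 : ℝ) 1, formDomain μ w δ) ∧
    ((formDomain μ w 1 = ⋂ δ ∈ Set.Ioo (0 : ℝ) 1, formDomain μ w δ) ↔
      ∃ C : ℝ, ∀ᵐ x ∂μ, w x ≤ C) := by
  have hsub : formDomain μ w 1 ⊆ ⋂ δ ∈ Ioo (0 : ℝ) 1, formDomain μ w δ := fun u hu =>
    mem_iInter₂.2 fun δ hδ => formDomain_subset_formDomain hw_meas hw_nonneg hδ.1.le hδ.2.le hu
  refine ⟨hsub, fun heq => ?_, fun ⟨C, hC⟩ => hsub.antisymm fun u hu => ?_⟩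
  · by_contra hunb
    obtain ⟨u, hu, hu1⟩ :=
      exists_mem_iInter_formDomain_notMem_formDomain_one hw_meas hw_nonneg hunb
    exact hu1 (heq ▸ hu)
  · exact mem_formDomain_of_memLp_of_ae_le hw_meas hw_nonneg zero_le_one hC
      (mem_iInter₂.1 hu (1 / 2) ⟨by norm_num, by norm_num⟩).1
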